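/- Local coherence bound for Fourier/Haar: with sampling levels given by the dyadic frequency bands W_j and sparsity levels given by Haar wavelet scales, the blocks U_{jl} of the DFT-to-Haar change-of-basis matrix U = FΦ satisfy μ(U_{jj}) ≲ 2^{−j} and μ(U_{jl}) ≲ μ(U_{jj}) 2^{−|j−l|} for all j, l = 0,...,r−1, where μ of a block is the maximum squared modulus of its entries. -/

import Mathlib

/-!
The Haar wavelet at scale `l` and shift `p` is `2^((l-r)/2)` times the difference of the
indicators of two adjacent blocks of length `m = 2^(r-l-1)` starting at `a = p 2^(r-l)`, so its
DFT at `ω` is a difference of two geometric sums in `ζ = exp (-2πiω/2^r)`, and multiplying by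
`ζ - 1` telescopes it to `-ζ^a (ζ^m - 1)^2`. Taking moduli,
`‖Fψ(ω)‖² sin² (πω/2^r) = 4 · 2^l / 4^r · sin⁴ (πω/2^(l+1))`.

For `ω ∈ W_j` we have `2^(j-1) ≤ |ω| ≤ 2^j ≤ 2^(r-1)`, so Jordan's inequality bounds the sine
on the left from below by `2|ω|/2^r`; bounding the sine on the right by `1`, resp. by its
argument, gives `‖Fψ(ω)‖² ≤ 4 · 2^l / 4^j` and `‖Fψ(ω)‖² ≤ π⁴ 4^j / (16 · 8^l)`, whence
`μ(U_{jl}) ≤ (π⁴/4) 2^(-j) 2^(-|j-l|)`. At `ω = 2^j`, `l = j` the right-hand sine is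
`sin (π/2) = 1`, and `|sin x| ≤ |x|` on the left gives `μ(U_{jj}) ≥ (4/π²) 2^(-j)`.
-/

/-- The discrete Haar wavelet in `ℂ^(2^r)` at scale `l` and shift `p`. -/
noncomputable def haarWavelet (r l p : ℕ) (t : Fin (2 ^ r)) : ℂ :=
  if p * 2 ^ (r - l) ≤ (t : ℕ) ∧ (t : ℕ) < p * 2 ^ (r - l) + 2 ^ (r - l - 1) then
    ((2 : ℝ) ^ (((l : ℝ) - r) / 2) : ℝ)
  else if p * 2 ^ (r - l) + 2 ^ (r - l - 1) ≤ (t : ℕ) ∧ (t : ℕ) < (p + 1) * 2 ^ (r - l) then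
    -((2 : ℝ) ^ (((l : ℝ) - r) / 2) : ℝ)
  else 0

/-- The (unitary) discrete Fourier transform of `x ∈ ℂ^n` at integer frequency `ω`. -/
noncomputable def dftAt {n : ℕ} (x : Fin n → ℂ) (ω : ℤ) : ℂ :=
  (1 / Real.sqrt n : ℝ) *
    ∑ t : Fin n, x t * Complex.exp (-2 * Real.pi * Complex.I * ω * (t : ℕ) / n)

/-- The `j`-th dyadic frequency band: `W_0 = {0, 1}` and
`W_j = {-2^j+1, ..., -2^{j-1}} ∪ {2^{j-1}+1, ..., 2^j}` for `j ≥ 1`. -/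
def freqBand (j : ℕ) : Set ℤ :=
  if j = 0 then {0, 1}
  else Set.Icc (-2 ^ j + 1) (-2 ^ (j - 1)) ∪ Set.Icc (2 ^ (j - 1) + 1) (2 ^ j)

/-- The local coherence `μ(U_{jl})` of the block of the DFT-to-Haar matrix `U = FΦ`
with rows in the frequency band `W_j` and columns the Haar wavelets at scale `l`:
the supremum of the squared moduli of its entries. -/
noncomputable def muBlock (r j l : ℕ) : ℝ :=
  sSup {t : ℝ | ∃ ω ∈ freqBand j, ∃ p < 2 ^ l,
    t = ‖dftAt (haarWavelet r l p) ω‖ ^ 2}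

open Real Finset
open Complex (I)

lemma sum_Ico_pow_sub_sum_Ico_pow_mul_sub_one {R : Type*} [CommRing R] (z : R) (a m : ℕ) :
    (∑ t ∈ Ico a (a + m), z ^ t - ∑ t ∈ Ico (a + m) (a + 2 * m), z ^ t) * (z - 1) =
      -(z ^ a * (z ^ m - 1) ^ 2) := by
  rw [sub_mul, geom_sum_Ico_mul z (by omega), geom_sum_Ico_mul z (by omega)]
  ring

lemma sum_haarWavelet_mul {r l p : ℕ} (hl : l < r) (hp : p < 2 ^ l) (f : ℕ → ℂ) :
    ∑ t : Fin (2 ^ r), haarWavelet r l p t * f t =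
      ((2 : ℝ) ^ (((l : ℝ) - r) / 2) : ℝ) *
        (∑ t ∈ Ico (p * 2 ^ (r - l)) (p * 2 ^ (r - l) + 2 ^ (r - l - 1)), f t -
          ∑ t ∈ Ico (p * 2 ^ (r - l) + 2 ^ (r - l - 1))
            (p * 2 ^ (r - l) + 2 * 2 ^ (r - l - 1)), f t) := by
  set a := p * 2 ^ (r - l) with ha
  set m := 2 ^ (r - l - 1) with hm
  have hsplit : 2 ^ (r - l) = 2 * m := by rw [hm, ← pow_succ']; congr 1; omega
  have hab : (p + 1) * 2 ^ (r - l) = a + 2 * m := by rw [ha, hsplit]; ring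
  have hfit : a + 2 * m ≤ 2 ^ r := by
    calc a + 2 * m = (p + 1) * 2 ^ (r - l) := hab.symm
      _ ≤ 2 ^ l * 2 ^ (r - l) := Nat.mul_le_mul_right _ hp
      _ = 2 ^ r := by rw [← pow_add, Nat.add_sub_cancel' hl.le]
  have hterm : ∀ t : Fin (2 ^ r), haarWavelet r l p t * f t =
      ((2 : ℝ) ^ (((l : ℝ) - r) / 2) : ℝ) *
        ((if (t : ℕ) ∈ Ico a (a + m) then f t else 0) -
          if (t : ℕ) ∈ Ico (a + m) (a + 2 * m) then f t else 0) := by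
    intro t
    rw [haarWavelet]
    simp only [mem_Ico]
    split_ifs <;> first | omega | ring
  rw [sum_congr rfl fun t _ => hterm t, ← mul_sum, sum_sub_distrib,
    Fin.sum_univ_eq_sum_range (fun t => if t ∈ Ico a (a + m) then f t else 0),
    Fin.sum_univ_eq_sum_range (fun t => if t ∈ Ico (a + m) (a + 2 * m) then f t else 0),
    sum_ite_mem, sum_ite_mem, inter_eq_right.mpr, inter_eq_right.mpr]
  all_goals intro t; simp only [mem_Ico, mem_range]; omega

lemma sum_haarWavelet {r l p : ℕ} (hl : l < r) (hp : p < 2 ^ l) :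
    ∑ t : Fin (2 ^ r), haarWavelet r l p t = 0 := by
  simpa [two_mul, ← add_assoc] using sum_haarWavelet_mul hl hp 1

lemma dftAt_haarWavelet_zero {r l p : ℕ} (hl : l < r) (hp : p < 2 ^ l) :
    dftAt (haarWavelet r l p) 0 = 0 := by
  simp [dftAt, sum_haarWavelet hl hp]

lemma exp_dft_kernel_eq_pow (n : ℕ) (ω : ℤ) (t : ℕ) :
    Complex.exp (-2 * π * I * ω * t / n) = Complex.exp (I * ↑(-2 * π * ω / n)) ^ t := by
  rw [← Complex.exp_nat_mul]
  congr 1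
  push_cast
  ring

lemma dftAt_haarWavelet_mul_sub_one {r l p : ℕ} (hl : l < r) (hp : p < 2 ^ l) (ω : ℤ) :
    dftAt (haarWavelet r l p) ω * (Complex.exp (I * ↑(-2 * π * ω / 2 ^ r)) - 1) =
      -(((1 / √(2 ^ r) : ℝ) : ℂ) * ((2 : ℝ) ^ (((l : ℝ) - r) / 2) : ℝ) *
        (Complex.exp (I * ↑(-2 * π * ω / 2 ^ r)) ^ (p * 2 ^ (r - l)) *
          (Complex.exp (I * ↑(-2 * π * ω / 2 ^ r)) ^ 2 ^ (r - l - 1) - 1) ^ 2)) := by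
  simp_rw [dftAt, exp_dft_kernel_eq_pow, Nat.cast_pow, Nat.cast_ofNat]
  rw [sum_haarWavelet_mul hl hp (Complex.exp (I * ↑(-2 * π * ω / 2 ^ r)) ^ ·), mul_assoc,
    mul_assoc, sum_Ico_pow_sub_sum_Ico_pow_mul_sub_one]
  ring

/-- Stated multiplied by `sin² (πω/2^r) = ‖ζ - 1‖² / 4`, so that it holds also where `ζ = 1`. -/
lemma norm_dftAt_haarWavelet_sq_mul_sin_sq {r l p : ℕ} (hl : l < r) (hp : p < 2 ^ l) (ω : ℤ) :
    ‖dftAt (haarWavelet r l p) ω‖ ^ 2 * sin (π * ω / 2 ^ r) ^ 2 =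
      4 * 2 ^ l / 4 ^ r * sin (π * ω / 2 ^ (l + 1)) ^ 4 := by
  have h := congrArg (‖·‖ ^ 2) (dftAt_haarWavelet_mul_sub_one hl hp ω)
  set θ : ℝ := -2 * π * ω / 2 ^ r with hθ
  have hpow : Complex.exp (I * θ) ^ 2 ^ (r - l - 1) =
      Complex.exp (I * ↑(2 ^ (r - l - 1) * θ)) := by
    rw [← Complex.exp_nat_mul]; congr 1; push_cast; ring
  have hhalf : 2 ^ (r - l - 1) * θ / 2 = -(π * ω / 2 ^ (l + 1)) := by
    have h2r : (2 : ℝ) ^ (r - l - 1) * 2 ^ (l + 1) = 2 ^ r := by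
      rw [← pow_add]; congr 1; omega
    rw [hθ, ← h2r]
    field_simp
  have hθhalf : θ / 2 = -(π * ω / 2 ^ r) := by ring
  have hscale : ((2 : ℝ) ^ (((l : ℝ) - r) / 2)) ^ 2 = 2 ^ l / 2 ^ r := by
    rw [← Real.rpow_natCast, ← Real.rpow_mul zero_le_two, Nat.cast_ofNat,
      div_mul_cancel₀ _ two_ne_zero, Real.rpow_sub zero_lt_two, Real.rpow_natCast,
      Real.rpow_natCast]
  simp only [norm_mul, norm_neg, norm_pow, Complex.norm_exp_I_mul_ofReal, one_pow, one_mul,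
    Complex.norm_exp_I_mul_ofReal_sub_one, hpow, Complex.norm_real, Real.norm_eq_abs, mul_pow,
    sq_abs, div_pow, Real.sq_sqrt (pow_nonneg zero_le_two r), hscale, hhalf, hθhalf,
    Real.sin_neg] at h
  rw [show (4 : ℝ) ^ r = 2 ^ r * 2 ^ r by rw [← mul_pow]; norm_num]
  field_simp at h ⊢
  linear_combination h

lemma sq_mul_norm_dftAt_haarWavelet_sq_le {r l p : ℕ} (hl : l < r) (hp : p < 2 ^ l) {ω : ℤ}
    (hω : |(ω : ℝ)| ≤ 2 ^ (r - 1)) :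
    (ω : ℝ) ^ 2 * ‖dftAt (haarWavelet r l p) ω‖ ^ 2 ≤
      2 ^ l * sin (π * ω / 2 ^ (l + 1)) ^ 4 := by
  have h2r : (2 : ℝ) ^ r = 2 * 2 ^ (r - 1) := by rw [← pow_succ']; congr 1; omega
  have hjordan : 2 * |(ω : ℝ)| / 2 ^ r ≤ |sin (π * ω / 2 ^ r)| := by
    have hx : |π * ω / 2 ^ r| = π * |(ω : ℝ)| / 2 ^ r := by
      rw [abs_div, abs_mul, abs_of_pos pi_pos, abs_of_pos (by positivity : (0 : ℝ) < 2 ^ r)]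
    have hx_le : |π * ω / 2 ^ r| ≤ π / 2 := by
      rw [hx, div_le_div_iff₀ (by positivity) two_pos, h2r]
      linarith [mul_le_mul_of_nonneg_left hω pi_pos.le]
    calc 2 * |(ω : ℝ)| / 2 ^ r = 2 / π * |π * ω / 2 ^ r| := by rw [hx]; field_simp
      _ ≤ _ := Real.mul_abs_le_abs_sin hx_le
  have hsin : 4 * (ω : ℝ) ^ 2 / 4 ^ r ≤ sin (π * ω / 2 ^ r) ^ 2 := by
    calc 4 * (ω : ℝ) ^ 2 / 4 ^ r = (2 * |(ω : ℝ)| / 2 ^ r) ^ 2 := by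
          rw [div_pow, mul_pow, sq_abs, ← pow_mul, mul_comm r, pow_mul]; norm_num
      _ ≤ |sin (π * ω / 2 ^ r)| ^ 2 := by gcongr
      _ = _ := sq_abs _
  calc (ω : ℝ) ^ 2 * ‖dftAt (haarWavelet r l p) ω‖ ^ 2
      = 4 ^ r / 4 * (‖dftAt (haarWavelet r l p) ω‖ ^ 2 * (4 * (ω : ℝ) ^ 2 / 4 ^ r)) := by
        field_simp
    _ ≤ 4 ^ r / 4 *
        (‖dftAt (haarWavelet r l p) ω‖ ^ 2 * sin (π * ω / 2 ^ r) ^ 2) := by gcongr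
    _ = _ := by
        rw [norm_dftAt_haarWavelet_sq_mul_sin_sq hl hp]
        field_simp

lemma div_two_pow_le_norm_dftAt_haarWavelet_two_pow_sq {r j : ℕ} (hj : j < r) :
    4 / π ^ 2 / 2 ^ j ≤ ‖dftAt (haarWavelet r j 0) (2 ^ j)‖ ^ 2 := by
  have hkey := norm_dftAt_haarWavelet_sq_mul_sin_sq hj (pow_pos two_pos j) (2 ^ j)
  have hpeak : sin (π * ((2 ^ j : ℤ) : ℝ) / 2 ^ (j + 1)) = 1 := by
    rw [← Real.sin_pi_div_two]; congr 1; push_cast; field_simp; ring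
  have hsin : sin (π * ((2 ^ j : ℤ) : ℝ) / 2 ^ r) ^ 2 ≤ (π * 2 ^ j / 2 ^ r) ^ 2 := by
    push_cast; exact Real.sin_sq_le_sq
  rw [hpeak, one_pow, mul_one] at hkey
  have hX : 4 * 2 ^ j / 4 ^ r ≤
      ‖dftAt (haarWavelet r j 0) (2 ^ j)‖ ^ 2 * (π * 2 ^ j / 2 ^ r) ^ 2 :=
    hkey ▸ mul_le_mul_of_nonneg_left hsin (by positivity)
  rw [show (4 : ℝ) ^ r = (2 ^ r) ^ 2 by rw [← pow_mul, mul_comm, pow_mul]; norm_num] at hX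
  rw [div_div, div_le_iff₀ (by positivity)]
  field_simp at hX
  linarith

lemma norm_dftAt_haarWavelet_sq_le_two_pow_div_sq {r l p : ℕ} (hl : l < r) (hp : p < 2 ^ l)
    {ω : ℤ} (hω0 : ω ≠ 0) (hω : |(ω : ℝ)| ≤ 2 ^ (r - 1)) :
    ‖dftAt (haarWavelet r l p) ω‖ ^ 2 ≤ 2 ^ l / (ω : ℝ) ^ 2 := by
  have hsin : sin (π * ω / 2 ^ (l + 1)) ^ 4 ≤ 1 := by
    simpa only [← pow_mul] using pow_le_one₀ (n := 2) (sq_nonneg _) (Real.sin_sq_le_one _)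
  have h := (sq_mul_norm_dftAt_haarWavelet_sq_le hl hp hω).trans
    (mul_le_mul_of_nonneg_left hsin (by positivity))
  rw [le_div_iff₀ (by positivity)]
  linarith

lemma norm_dftAt_haarWavelet_sq_le_sq_div {r l p : ℕ} (hl : l < r) (hp : p < 2 ^ l)
    {ω : ℤ} (hω : |(ω : ℝ)| ≤ 2 ^ (r - 1)) :
    ‖dftAt (haarWavelet r l p) ω‖ ^ 2 ≤ π ^ 4 / 16 * (ω : ℝ) ^ 2 / 8 ^ l := by
  rcases eq_or_ne ω 0 with rfl | hω0
  · simp [dftAt_haarWavelet_zero hl hp]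
  have hsin : sin (π * ω / 2 ^ (l + 1)) ^ 4 ≤ (π * ω / 2 ^ (l + 1)) ^ 4 := by
    simpa only [← pow_mul] using pow_le_pow_left₀ (sq_nonneg _) Real.sin_sq_le_sq 2
  have h := (sq_mul_norm_dftAt_haarWavelet_sq_le hl hp hω).trans
    (mul_le_mul_of_nonneg_left hsin (by positivity))
  have hrhs :
      2 ^ l * (π * ω / 2 ^ (l + 1)) ^ 4 = (ω : ℝ) ^ 2 * (π ^ 4 / 16 * ω ^ 2 / 8 ^ l) := by
    rw [pow_succ, show (8 : ℝ) ^ l = (2 ^ l) ^ 3 by rw [← pow_mul, mul_comm, pow_mul]; norm_num]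
    field_simp
    ring
  exact le_of_mul_le_mul_left (hrhs ▸ h) (by positivity)

lemma two_pow_mem_freqBand (j : ℕ) : (2 : ℤ) ^ j ∈ freqBand j := by
  rcases Nat.eq_zero_or_pos j with rfl | hj
  · simp [freqBand]
  · have h : (2 : ℤ) ^ j = 2 * 2 ^ (j - 1) := by rw [← pow_succ']; congr 1; omega
    have : (0 : ℤ) < 2 ^ (j - 1) := by positivity
    simp only [freqBand, if_neg hj.ne', Set.mem_union, Set.mem_Icc]
    omega

lemma abs_bounds_of_mem_freqBand {j : ℕ} {ω : ℤ} (hω : ω ∈ freqBand j) (hω0 : ω ≠ 0) :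
    (2 : ℝ) ^ j ≤ 2 * |(ω : ℝ)| ∧ |(ω : ℝ)| ≤ 2 ^ j := by
  suffices 2 ^ j ≤ 2 * |ω| ∧ |ω| ≤ 2 ^ j by exact_mod_cast this
  rcases Nat.eq_zero_or_pos j with rfl | hj
  · simp only [freqBand, if_true, Set.mem_insert_iff, Set.mem_singleton_iff] at hω
    cases abs_cases ω <;> omega
  · have h : (2 : ℤ) ^ j = 2 * 2 ^ (j - 1) := by rw [← pow_succ']; congr 1; omega
    simp only [freqBand, if_neg hj.ne', Set.mem_union, Set.mem_Icc] at hω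
    cases abs_cases ω <;> omega

lemma norm_dftAt_haarWavelet_sq_le_of_mem_freqBand {r j l p : ℕ} (hj : j < r) (hl : l < r)
    (hp : p < 2 ^ l) {ω : ℤ} (hω : ω ∈ freqBand j) :
    ‖dftAt (haarWavelet r l p) ω‖ ^ 2 ≤ 4 * 2 ^ l / 4 ^ j ∧
      ‖dftAt (haarWavelet r l p) ω‖ ^ 2 ≤ π ^ 4 / 16 * 4 ^ j / 8 ^ l := by
  rcases eq_or_ne ω 0 with rfl | hω0
  · rw [dftAt_haarWavelet_zero hl hp, norm_zero, zero_pow two_ne_zero]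
    constructor <;> positivity
  obtain ⟨hlow, hhigh⟩ := abs_bounds_of_mem_freqBand hω hω0
  have hωr : |(ω : ℝ)| ≤ 2 ^ (r - 1) :=
    hhigh.trans (pow_le_pow_right₀ one_le_two (by omega))
  have h4j : (4 : ℝ) ^ j = (2 ^ j) ^ 2 := by rw [← pow_mul, mul_comm, pow_mul]; norm_num
  have hsq_low : (4 : ℝ) ^ j ≤ 4 * ω ^ 2 := by
    rw [h4j, show 4 * (ω : ℝ) ^ 2 = (2 * |(ω : ℝ)|) ^ 2 by rw [mul_pow, sq_abs]; norm_num]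
    gcongr
  have hsq_high : (ω : ℝ) ^ 2 ≤ 4 ^ j := by
    rw [h4j, ← sq_abs]
    gcongr
  constructor
  · calc ‖dftAt (haarWavelet r l p) ω‖ ^ 2 ≤ 2 ^ l / (ω : ℝ) ^ 2 :=
          norm_dftAt_haarWavelet_sq_le_two_pow_div_sq hl hp hω0 hωr
      _ = 4 * 2 ^ l / (4 * (ω : ℝ) ^ 2) := by field_simp
      _ ≤ 4 * 2 ^ l / 4 ^ j := by gcongr
  · calc ‖dftAt (haarWavelet r l p) ω‖ ^ 2 ≤ π ^ 4 / 16 * (ω : ℝ) ^ 2 / 8 ^ l :=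
          norm_dftAt_haarWavelet_sq_le_sq_div hl hp hωr
      _ ≤ π ^ 4 / 16 * 4 ^ j / 8 ^ l := by gcongr

lemma norm_dftAt_haarWavelet_sq_le_two_zpow {r j l p : ℕ} (hj : j < r) (hl : l < r)
    (hp : p < 2 ^ l) {ω : ℤ} (hω : ω ∈ freqBand j) :
    ‖dftAt (haarWavelet r l p) ω‖ ^ 2 ≤
      π ^ 4 / 4 * (2 : ℝ) ^ (-(j : ℤ)) * (2 : ℝ) ^ (-|(j : ℤ) - (l : ℤ)|) := by
  obtain ⟨hfine, hcoarse⟩ := norm_dftAt_haarWavelet_sq_le_of_mem_freqBand hj hl hp hω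
  have hπ : (16 : ℝ) ≤ π ^ 4 :=
    calc (16 : ℝ) = 2 ^ 4 := by norm_num
      _ ≤ π ^ 4 := pow_le_pow_left₀ zero_le_two Real.two_le_pi 4
  rcases le_total l j with hlj | hjl
  · obtain ⟨k, rfl⟩ := Nat.exists_eq_add_of_le hlj
    rw [show |((l + k : ℕ) : ℤ) - l| = (k : ℤ) by simp, zpow_neg, zpow_neg,
      zpow_natCast, zpow_natCast]
    calc ‖dftAt (haarWavelet r l p) ω‖ ^ 2 ≤ 4 * 2 ^ l / 4 ^ (l + k) := hfine
      _ = 4 * (2 ^ (l + k))⁻¹ * (2 ^ k)⁻¹ := by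
          rw [show (4 : ℝ) ^ (l + k) = 2 ^ (l + k) * 2 ^ l * 2 ^ k by
            rw [show (4 : ℝ) = 2 * 2 by norm_num, mul_pow, pow_add]; ring]
          field_simp
      _ ≤ π ^ 4 / 4 * (2 ^ (l + k))⁻¹ * (2 ^ k)⁻¹ := by gcongr; linarith
  · obtain ⟨k, rfl⟩ := Nat.exists_eq_add_of_le hjl
    rw [show |(j : ℤ) - ((j + k : ℕ) : ℤ)| = (k : ℤ) by simp, zpow_neg, zpow_neg,
      zpow_natCast, zpow_natCast]
    calc ‖dftAt (haarWavelet r (j + k) p) ω‖ ^ 2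
        ≤ π ^ 4 / 16 * 4 ^ j / 8 ^ (j + k) := hcoarse
      _ = π ^ 4 / 16 * (2 ^ j)⁻¹ * (2 ^ k)⁻¹ * (4 ^ k)⁻¹ := by
          rw [show (8 : ℝ) ^ (j + k) = 4 ^ j * 2 ^ j * 2 ^ k * 4 ^ k by
            rw [show (8 : ℝ) = 2 * 4 by norm_num, mul_pow, pow_add, pow_add]; ring]
          field_simp
      _ ≤ π ^ 4 / 16 * (2 ^ j)⁻¹ * (2 ^ k)⁻¹ * 1 := by
          gcongr
          exact inv_le_one_of_one_le₀ (one_le_pow₀ (by norm_num))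
      _ ≤ π ^ 4 / 4 * (2 ^ j)⁻¹ * (2 ^ k)⁻¹ := by
          rw [mul_one]
          gcongr
          norm_num

lemma muBlock_le_two_zpow {r j l : ℕ} (hj : j < r) (hl : l < r) :
    muBlock r j l ≤
      π ^ 4 / 4 * (2 : ℝ) ^ (-(j : ℤ)) * (2 : ℝ) ^ (-|(j : ℤ) - (l : ℤ)|) :=
  Real.sSup_le (by
    rintro _ ⟨ω, hω, p, hp, rfl⟩
    exact norm_dftAt_haarWavelet_sq_le_two_zpow hj hl hp hω) (by positivity)

lemma norm_dftAt_haarWavelet_sq_le_muBlock {r j l p : ℕ} (hj : j < r) (hl : l < r)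
    (hp : p < 2 ^ l) {ω : ℤ} (hω : ω ∈ freqBand j) :
    ‖dftAt (haarWavelet r l p) ω‖ ^ 2 ≤ muBlock r j l :=
  le_csSup ⟨_, by
    rintro _ ⟨ω, hω, p, hp, rfl⟩
    exact norm_dftAt_haarWavelet_sq_le_two_zpow hj hl hp hω⟩ ⟨ω, hω, p, hp, rfl⟩

lemma two_zpow_le_muBlock {r j : ℕ} (hj : j < r) :
    (2 : ℝ) ^ (-(j : ℤ)) ≤ π ^ 2 / 4 * muBlock r j j := by
  have hpeak : 4 / π ^ 2 / 2 ^ j ≤ muBlock r j j :=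
    (div_two_pow_le_norm_dftAt_haarWavelet_two_pow_sq hj).trans
      (norm_dftAt_haarWavelet_sq_le_muBlock hj hj (pow_pos two_pos j) (two_pow_mem_freqBand j))
  rw [zpow_neg, zpow_natCast]
  calc ((2 : ℝ) ^ j)⁻¹ = π ^ 2 / 4 * (4 / π ^ 2 / 2 ^ j) := by field_simp
    _ ≤ π ^ 2 / 4 * muBlock r j j := by gcongr

/-- with sampling levels the dyadic frequency bands and sparsity levels
the Haar wavelet scales, the blocks of `U = FΦ` satisfy `μ(U_{jj}) ≲ 2^{-j}` and
`μ(U_{jl}) ≲ μ(U_{jj}) 2^{-|j-l|}`, with an absolute constant independent of `r, j, l`. -/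
theorem local_coherence_fourier_haar :
    ∃ C : ℝ, 0 < C ∧ ∀ r j l : ℕ, j < r → l < r →
      muBlock r j j ≤ C * (2 : ℝ) ^ (-(j : ℤ)) ∧
      muBlock r j l ≤ C * muBlock r j j * (2 : ℝ) ^ (-|(j : ℤ) - (l : ℤ)|) := by
  have hπ : (1 : ℝ) ≤ π ^ 2 / 4 := by nlinarith [Real.two_le_pi]
  refine ⟨π ^ 6 / 16, by positivity, fun r j l hj hl => ⟨?_, ?_⟩⟩
  · calc muBlock r j j
        ≤ π ^ 4 / 4 * (2 : ℝ) ^ (-(j : ℤ)) * (2 : ℝ) ^ (-|(j : ℤ) - (j : ℤ)|) :=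
          muBlock_le_two_zpow hj hj
      _ = π ^ 4 / 4 * 1 * (2 : ℝ) ^ (-(j : ℤ)) := by simp
      _ ≤ π ^ 4 / 4 * (π ^ 2 / 4) * (2 : ℝ) ^ (-(j : ℤ)) := by gcongr
      _ = π ^ 6 / 16 * (2 : ℝ) ^ (-(j : ℤ)) := by ring
  · calc muBlock r j l
        ≤ π ^ 4 / 4 * (2 : ℝ) ^ (-(j : ℤ)) * (2 : ℝ) ^ (-|(j : ℤ) - (l : ℤ)|) :=
          muBlock_le_two_zpow hj hl
      _ ≤ π ^ 4 / 4 * (π ^ 2 / 4 * muBlock r j j) * (2 : ℝ) ^ (-|(j : ℤ) - (l : ℤ)|) := by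
          gcongr
          exact two_zpow_le_muBlock hj
      _ = π ^ 6 / 16 * muBlock r j j * (2 : ℝ) ^ (-|(j : ℤ) - (l : ℤ)|) := by ring
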